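/- Let n ≥ 1 and let w_0 ∈ S_n denote the longest permutation (i ↦ n+1−i). For every polynomial F ∈ ℚ[x_1,…,x_n], the polynomial ∂_{w_0} F is a symmetric polynomial, i.e., it is invariant under the action of every permutation in S_n. -/

import Mathlib

open MvPolynomial
open scoped Classical

/-- The Coxeter length of a permutation of `Fin n`, i.e. its number of inversions. -/
def permLen {n : ℕ} (w : Equiv.Perm (Fin n)) : ℕ :=
  (Finset.univ.filter (fun p : Fin n × Fin n => p.1 < p.2 ∧ w p.2 < w p.1)).card

/-- The adjacent transposition `s_i` exchanging the `i`-th and `(i+1)`-th letters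
(zero-indexed); junk value `1` if out of range. -/
def adjSwap (n : ℕ) (i : ℕ) : Equiv.Perm (Fin n) :=
  if h : i + 1 < n then Equiv.swap ⟨i, Nat.lt_of_succ_lt h⟩ ⟨i + 1, h⟩ else 1

/-- The longest element `w₀` of the symmetric group on `Fin n`, `i ↦ n - 1 - i`
(one-indexed: `i ↦ n + 1 - i`). -/
def w0 (n : ℕ) : Equiv.Perm (Fin n) := Fin.revPerm

/-- The Demazure (divided difference) operator with respect to a pair of variables `i j`:
`f ↦ (f - swap(i,j)·f) / (Xᵢ - Xⱼ)`.  The difference is always divisible by `Xᵢ - Xⱼ`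
(for `i ≠ j`), and the quotient is unique since the polynomial ring is a domain, so the
definition by choice below produces exactly this quotient. -/
noncomputable def demazure {σ : Type} [DecidableEq σ] (i j : σ)
    (f : MvPolynomial σ ℚ) : MvPolynomial σ ℚ :=
  if h : ∃ g, f - rename (Equiv.swap i j) f = (X i - X j) * g then h.choose else 0

/-- The Demazure operator `∂ᵢ` on `ℚ[x₀, …, x_{n-1}]` (zero-indexed). -/
noncomputable def demAt (n : ℕ) (i : ℕ) :
    MvPolynomial (Fin n) ℚ → MvPolynomial (Fin n) ℚ :=
  if h : i + 1 < n then demazure ⟨i, Nat.lt_of_succ_lt h⟩ ⟨i + 1, h⟩ else fun _ => 0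

/-- The composite Demazure operator `∂_{i₁} ∘ ⋯ ∘ ∂_{i_r}` along a word `l = [i₁, …, i_r]`. -/
noncomputable def demWord (n : ℕ) (l : List ℕ) :
    MvPolynomial (Fin n) ℚ → MvPolynomial (Fin n) ℚ :=
  l.foldr (fun i op => demAt n i ∘ op) id

/-- `l = [i₁, …, i_r]` is a reduced word for `w` if all letters are in range,
`s_{i₁} ⋯ s_{i_r} = w`, and `r = ℓ(w)` is the number of inversions of `w`. -/
def IsReducedWord (n : ℕ) (w : Equiv.Perm (Fin n)) (l : List ℕ) : Prop :=
  (∀ i ∈ l, i + 1 < n) ∧ (l.map (adjSwap n)).prod = w ∧ l.length = permLen w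

/-- The Demazure operator `∂_w`, defined along a chosen reduced word of `w`
(the result is independent of this choice). -/
noncomputable def demazureOf (n : ℕ) (w : Equiv.Perm (Fin n)) :
    MvPolynomial (Fin n) ℚ → MvPolynomial (Fin n) ℚ :=
  if h : ∃ l, IsReducedWord n w l then demWord n h.choose else fun _ => 0

/-- The Demazure operator `∂ᵢˣ` acting on the `x`-variables (the left summand) of
`ℚ[x₁, …, xₙ, t₁, …, tₙ]`. -/
noncomputable def demAtX (n : ℕ) (i : ℕ) :
    MvPolynomial (Fin n ⊕ Fin n) ℚ → MvPolynomial (Fin n ⊕ Fin n) ℚ :=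
  if h : i + 1 < n then
    demazure (Sum.inl ⟨i, Nat.lt_of_succ_lt h⟩) (Sum.inl ⟨i + 1, h⟩) else fun _ => 0

/-- Composite of `x`-variable Demazure operators along a word. -/
noncomputable def demWordX (n : ℕ) (l : List ℕ) :
    MvPolynomial (Fin n ⊕ Fin n) ℚ → MvPolynomial (Fin n ⊕ Fin n) ℚ :=
  l.foldr (fun i op => demAtX n i ∘ op) id

/-- The Demazure operator `∂_wˣ` in the `x`-variables, along a chosen reduced word of `w`. -/
noncomputable def demazureOfX (n : ℕ) (w : Equiv.Perm (Fin n)) :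
    MvPolynomial (Fin n ⊕ Fin n) ℚ → MvPolynomial (Fin n ⊕ Fin n) ℚ :=
  if h : ∃ l, IsReducedWord n w l then demWordX n h.choose else fun _ => 0

/-- The top product `∏_{i + j ≤ n} (xᵢ - tⱼ)` (one-indexed), i.e. the double Schubert
polynomial of the longest element. -/
noncomputable def schubProd (n : ℕ) : MvPolynomial (Fin n ⊕ Fin n) ℚ :=
  ∏ p ∈ Finset.univ.filter (fun p : Fin n × Fin n => (p.1 : ℕ) + (p.2 : ℕ) + 2 ≤ n),
    (X (Sum.inl p.1) - X (Sum.inr p.2))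

/-- The double Schubert polynomial `𝔖_w(x, t) = ∂ˣ_{w⁻¹w₀} (∏_{i+j≤n} (xᵢ - tⱼ))`. -/
noncomputable def schubert (n : ℕ) (w : Equiv.Perm (Fin n)) :
    MvPolynomial (Fin n ⊕ Fin n) ℚ :=
  demazureOfX n (w⁻¹ * w0 n) (schubProd n)

/-!
Each `∂ᵢ F` is `sᵢ`-invariant, so it suffices to show that for every `j` the operator `∂_{w₀}` can
be written along a reduced word beginning with `j`. Every `sⱼ` is a left descent of `w₀`, so such
a word exists, and `∂_w` does not depend on the reduced word: the divided differences satisfy the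
commutation and braid relations (checked by clearing the denominators `Xᵢ - Xⱼ`), and two reduced
words of `w` starting with different letters `i`, `j` can be connected, by induction on `ℓ(w)`,
through a reduced word starting with the braid word of `sᵢ, sⱼ`. Finally the adjacent
transpositions generate `S_n`.
-/

section Demazure

variable {σ : Type}

theorem X_sub_X_ne_zero {i j : σ} (h : i ≠ j) : (X i - X j : MvPolynomial σ ℚ) ≠ 0 :=
  sub_ne_zero.mpr fun he => h (X_injective he)

theorem rename_perm_rename_perm (e e' : Equiv.Perm σ) (f : MvPolynomial σ ℚ) :
    rename e (rename e' f) = rename (e * e') f := by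
  rw [rename_rename, Equiv.Perm.coe_mul]

variable [DecidableEq σ]

theorem X_sub_X_dvd_sub_rename_swap (i j : σ) (f : MvPolynomial σ ℚ) :
    (X i - X j : MvPolynomial σ ℚ) ∣ f - rename (Equiv.swap i j) f := by
  induction f using MvPolynomial.induction_on with
  | C a => simp
  | add p q hp hq => simpa only [map_add, add_sub_add_comm] using dvd_add hp hq
  | mul_X p k hp =>
    have hk : (X i - X j : MvPolynomial σ ℚ) ∣ X k - X (Equiv.swap i j k) := by
      rcases eq_or_ne k i with rfl | hki
      · simp
      rcases eq_or_ne k j with rfl | hkj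
      · exact ⟨-1, by simp⟩
      · simp [Equiv.swap_apply_of_ne_of_ne hki hkj]
    have : p * X k - rename (Equiv.swap i j) (p * X k)
        = (p - rename (Equiv.swap i j) p) * X k
          + rename (Equiv.swap i j) p * (X k - X (Equiv.swap i j k)) := by
      rw [map_mul, rename_X]; ring
    rw [this]
    exact dvd_add (hp.mul_right _) (hk.mul_left _)

theorem X_sub_X_mul_demazure (i j : σ) (f : MvPolynomial σ ℚ) :
    (X i - X j) * demazure i j f = f - rename (Equiv.swap i j) f := by
  have h : ∃ g, f - rename (Equiv.swap i j) f = (X i - X j) * g :=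
    X_sub_X_dvd_sub_rename_swap i j f
  rw [demazure, dif_pos h]
  exact h.choose_spec.symm

theorem demazure_eq_of_mul {i j : σ} (h : i ≠ j) {f g : MvPolynomial σ ℚ}
    (hg : (X i - X j) * g = f - rename (Equiv.swap i j) f) : demazure i j f = g :=
  mul_left_cancel₀ (X_sub_X_ne_zero h) ((X_sub_X_mul_demazure i j f).trans hg.symm)

theorem demazure_neg {i j : σ} (h : i ≠ j) (f : MvPolynomial σ ℚ) :
    demazure i j (-f) = -demazure i j f :=
  demazure_eq_of_mul h <| by rw [map_neg, mul_neg, X_sub_X_mul_demazure]; ring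

theorem demazure_swap_args {i j : σ} (h : i ≠ j) (f : MvPolynomial σ ℚ) :
    demazure j i f = -demazure i j f :=
  demazure_eq_of_mul h.symm <| by
    rw [Equiv.swap_comm, ← X_sub_X_mul_demazure]; ring

theorem rename_swap_rename_swap (i j : σ) (f : MvPolynomial σ ℚ) :
    rename (Equiv.swap i j) (rename (Equiv.swap i j) f) = f := by
  rw [rename_perm_rename_perm, Equiv.swap_mul_self, Equiv.Perm.coe_one, rename_id,
    AlgHom.id_apply]

theorem rename_swap_demazure {i j : σ} (h : i ≠ j) (f : MvPolynomial σ ℚ) :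
    rename (Equiv.swap i j) (demazure i j f) = demazure i j f := by
  have hs := congrArg (rename (Equiv.swap i j)) (X_sub_X_mul_demazure i j f)
  simp only [map_mul, map_sub, rename_X, Equiv.swap_apply_left, Equiv.swap_apply_right,
    rename_swap_rename_swap] at hs
  exact (demazure_eq_of_mul h (by linear_combination -hs)).symm

theorem mul_demazure_demazure_of_disjoint {i j k l : σ} (hik : i ≠ k) (hil : i ≠ l)
    (hjk : j ≠ k) (hjl : j ≠ l) (f : MvPolynomial σ ℚ) :
    (X i - X j) * (X k - X l) * demazure i j (demazure k l f)
      = f - rename (Equiv.swap k l) f - rename (Equiv.swap i j) f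
        + rename (Equiv.swap i j) (rename (Equiv.swap k l) f) := by
  have inner := X_sub_X_mul_demazure k l f
  have inner' := congrArg (rename (Equiv.swap i j)) inner
  simp only [map_mul, map_sub, rename_X, Equiv.swap_apply_of_ne_of_ne hik.symm hjk.symm,
    Equiv.swap_apply_of_ne_of_ne hil.symm hjl.symm] at inner'
  linear_combination (X k - X l) * X_sub_X_mul_demazure i j (demazure k l f) + inner - inner'

theorem demazure_demazure_comm {i j k l : σ} (hij : i ≠ j) (hkl : k ≠ l) (hik : i ≠ k)
    (hil : i ≠ l) (hjk : j ≠ k) (hjl : j ≠ l) (f : MvPolynomial σ ℚ) :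
    demazure i j (demazure k l f) = demazure k l (demazure i j f) := by
  have hcomm : Equiv.swap i j * Equiv.swap k l = Equiv.swap k l * Equiv.swap i j := by
    rw [Equiv.mul_swap_eq_swap_mul, Equiv.swap_apply_of_ne_of_ne hik.symm hjk.symm,
      Equiv.swap_apply_of_ne_of_ne hil.symm hjl.symm]
  refine mul_left_cancel₀ (mul_ne_zero (X_sub_X_ne_zero hij) (X_sub_X_ne_zero hkl)) ?_
  have h1 := mul_demazure_demazure_of_disjoint hik hil hjk hjl f
  have h2 := mul_demazure_demazure_of_disjoint hik.symm hjk.symm hil.symm hjl.symm f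
  rw [rename_perm_rename_perm] at h1 h2
  rw [hcomm] at h1
  linear_combination h1 - h2

theorem mul_demazure_braid {a b c : σ} (hab : a ≠ b) (hbc : b ≠ c) (hac : a ≠ c)
    (f : MvPolynomial σ ℚ) :
    (X a - X b) * (X b - X c) * (X a - X c) * demazure a b (demazure b c (demazure a b f))
      = f - rename (Equiv.swap a b) f - rename (Equiv.swap b c) f
        + rename (Equiv.swap b c) (rename (Equiv.swap a b) f)
        + rename (Equiv.swap a b) (rename (Equiv.swap b c) f)
        - rename (Equiv.swap a b) (rename (Equiv.swap b c) (rename (Equiv.swap a b) f)) := by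
  set g₁ := demazure a b f
  set g₂ := demazure b c g₁
  have e₁ := X_sub_X_mul_demazure a b f
  have e₂ := X_sub_X_mul_demazure b c g₁
  have e₃ := X_sub_X_mul_demazure a b g₂
  have te₁ := congrArg (rename (Equiv.swap b c)) e₁
  simp only [map_mul, map_sub, rename_X, Equiv.swap_apply_left,
    Equiv.swap_apply_of_ne_of_ne hab hac] at te₁
  have d₂ : (X a - X b) * (X b - X c) * (X a - X c) * g₂
      = (X a - X c) * (f - rename (Equiv.swap a b) f)
        - (X a - X b) * (rename (Equiv.swap b c) f
          - rename (Equiv.swap b c) (rename (Equiv.swap a b) f)) := by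
    linear_combination (X a - X b) * (X a - X c) * e₂ + (X a - X c) * e₁ - (X a - X b) * te₁
  have sd₂ := congrArg (rename (Equiv.swap a b)) d₂
  simp only [map_mul, map_sub, rename_X, Equiv.swap_apply_left, Equiv.swap_apply_right,
    Equiv.swap_apply_of_ne_of_ne hac.symm hbc.symm, rename_swap_rename_swap] at sd₂
  refine mul_left_cancel₀ (X_sub_X_ne_zero hab) ?_
  linear_combination (X a - X b) * (X b - X c) * (X a - X c) * e₃ + d₂ + sd₂

theorem demazure_braid {a b c : σ} (hab : a ≠ b) (hbc : b ≠ c) (hac : a ≠ c)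
    (f : MvPolynomial σ ℚ) :
    demazure a b (demazure b c (demazure a b f)) = demazure b c (demazure a b (demazure b c f)) := by
  have hswap : Equiv.swap a b * Equiv.swap b c * Equiv.swap a b
      = Equiv.swap b c * Equiv.swap a b * Equiv.swap b c := by
    have h₁ := Equiv.swap_apply_apply (Equiv.swap a b) b c
    have h₂ := Equiv.swap_apply_apply (Equiv.swap b c) a b
    rw [Equiv.swap_inv] at h₁ h₂
    rw [Equiv.swap_apply_right, Equiv.swap_apply_of_ne_of_ne hac.symm hbc.symm] at h₁
    rw [Equiv.swap_apply_left, Equiv.swap_apply_of_ne_of_ne hab hac] at h₂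
    rw [← h₁, ← h₂]
  -- `∂_cb = -∂_bc`, so the formula for `(c, b, a)` computes the right-hand side
  have hrev : demazure c b (demazure b a (demazure c b f))
      = -demazure b c (demazure a b (demazure b c f)) := by
    simp only [demazure_swap_args hbc, demazure_swap_args hab, demazure_neg hab, neg_neg]
  have h₁ := mul_demazure_braid hab hbc hac f
  have h₂ := mul_demazure_braid hbc.symm hab.symm hac.symm f
  rw [hrev, Equiv.swap_comm c b, Equiv.swap_comm b a] at h₂
  simp only [rename_perm_rename_perm, ← mul_assoc] at h₁ h₂
  rw [hswap] at h₁
  refine mul_left_cancel₀ (mul_ne_zero (mul_ne_zero (X_sub_X_ne_zero hab) (X_sub_X_ne_zero hbc))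
    (X_sub_X_ne_zero hac)) ?_
  linear_combination h₁ - h₂

end Demazure

section AdjacentTranspositions

variable {n : ℕ}

theorem adjSwap_of_lt {i : ℕ} (h : i + 1 < n) :
    adjSwap n i = Equiv.swap ⟨i, Nat.lt_of_succ_lt h⟩ ⟨i + 1, h⟩ :=
  dif_pos h

theorem adjSwap_mul_self (i : ℕ) : adjSwap n i * adjSwap n i = 1 := by
  unfold adjSwap; split_ifs
  · exact Equiv.swap_mul_self _ _
  · exact mul_one 1

theorem adjSwap_mul_adjSwap_mul (i : ℕ) (w : Equiv.Perm (Fin n)) :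
    adjSwap n i * (adjSwap n i * w) = w := by
  rw [← mul_assoc, adjSwap_mul_self, one_mul]

theorem inv_adjSwap_mul_apply (i : ℕ) (w : Equiv.Perm (Fin n)) (x : Fin n) :
    (adjSwap n i * w)⁻¹ x = w⁻¹ (adjSwap n i x) := by
  rw [mul_inv_rev, inv_eq_of_mul_eq_one_right (adjSwap_mul_self i), Equiv.Perm.mul_apply]

theorem val_adjSwap {i : ℕ} (h : i + 1 < n) (x : Fin n) :
    (adjSwap n i x : ℕ) = if (x : ℕ) = i then i + 1 else if (x : ℕ) = i + 1 then i else x := by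
  rw [adjSwap_of_lt h, Equiv.swap_apply_def]
  split_ifs <;> simp_all [Fin.ext_iff]

theorem adjSwap_apply_left {i : ℕ} (h : i + 1 < n) :
    adjSwap n i ⟨i, Nat.lt_of_succ_lt h⟩ = ⟨i + 1, h⟩ := by
  rw [adjSwap_of_lt h, Equiv.swap_apply_left]

theorem adjSwap_apply_right {i : ℕ} (h : i + 1 < n) :
    adjSwap n i ⟨i + 1, h⟩ = ⟨i, Nat.lt_of_succ_lt h⟩ := by
  rw [adjSwap_of_lt h, Equiv.swap_apply_right]

theorem adjSwap_apply_of_ne {i a : ℕ} (ha : a < n) (hi : a ≠ i) (hi' : a ≠ i + 1) :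
    adjSwap n i ⟨a, ha⟩ = ⟨a, ha⟩ := by
  unfold adjSwap; split_ifs
  · exact Equiv.swap_apply_of_ne_of_ne (Fin.ne_of_val_ne hi) (Fin.ne_of_val_ne hi')
  · rfl

theorem adjSwap_mul_comm {i j : ℕ} (hij : i + 2 ≤ j ∨ j + 2 ≤ i) :
    adjSwap n i * adjSwap n j = adjSwap n j * adjSwap n i := by
  by_cases hi : i + 1 < n
  · by_cases hj : j + 1 < n
    · ext x
      simp only [Equiv.Perm.mul_apply, val_adjSwap hi, val_adjSwap hj]
      split_ifs <;> omega
    · simp [adjSwap, hj]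
  · simp [adjSwap, hi]

theorem adjSwap_braid {i : ℕ} (h : i + 2 < n) :
    adjSwap n i * adjSwap n (i + 1) * adjSwap n i
      = adjSwap n (i + 1) * adjSwap n i * adjSwap n (i + 1) := by
  ext x
  simp only [Equiv.Perm.mul_apply, val_adjSwap (n := n) (i := i) (by omega),
    val_adjSwap (n := n) (i := i + 1) h]
  split_ifs <;> omega

end AdjacentTranspositions

section Length

variable {n : ℕ}

/-- `sᵢ` is a left descent of `w`, i.e. `ℓ(sᵢ w) < ℓ(w)`: the value `i + 1` stands before `i` in
the one-line notation of `w`. -/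
def IsLeftDescent (w : Equiv.Perm (Fin n)) (i : ℕ) : Prop :=
  ∃ h : i + 1 < n, w⁻¹ ⟨i + 1, h⟩ < w⁻¹ ⟨i, Nat.lt_of_succ_lt h⟩

theorem permLen_one : permLen (1 : Equiv.Perm (Fin n)) = 0 := by
  rw [permLen, Finset.card_eq_zero, Finset.filter_eq_empty_iff]
  exact fun p _ hp => lt_asymm hp.1 hp.2

theorem permLen_adjSwap_mul_of_lt {i : ℕ} (h : i + 1 < n) {w : Equiv.Perm (Fin n)}
    (hw : w⁻¹ ⟨i, Nat.lt_of_succ_lt h⟩ < w⁻¹ ⟨i + 1, h⟩) :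
    permLen (adjSwap n i * w) = permLen w + 1 := by
  have hinv (a : Fin n) (k : ℕ) (hk : k < n) : a = w⁻¹ ⟨k, hk⟩ ↔ (w a : ℕ) = k := by
    rw [Equiv.Perm.eq_inv_iff_eq, Fin.ext_iff]
  have hset : Finset.univ.filter
        (fun p : Fin n × Fin n => p.1 < p.2 ∧ (adjSwap n i * w) p.2 < (adjSwap n i * w) p.1)
      = insert (w⁻¹ ⟨i, Nat.lt_of_succ_lt h⟩, w⁻¹ ⟨i + 1, h⟩)
          (Finset.univ.filter fun p : Fin n × Fin n => p.1 < p.2 ∧ w p.2 < w p.1) := by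
    ext ⟨a, b⟩
    have hab : (w a : ℕ) = w b ↔ (a : ℕ) = b := by simp [Fin.val_inj]
    have hlt : (w a : ℕ) = i → (w b : ℕ) = i + 1 → a < b := by
      intro ha hb
      rwa [(hinv a i _).2 ha, (hinv b (i + 1) h).2 hb]
    have hgt : (w a : ℕ) = i + 1 → (w b : ℕ) = i → b < a := by
      intro ha hb
      rwa [(hinv a (i + 1) h).2 ha, (hinv b i _).2 hb]
    simp only [Finset.mem_filter, Finset.mem_insert, Finset.mem_univ, true_and, Prod.mk.injEq,
      Equiv.Perm.mul_apply, hinv, Fin.lt_def, val_adjSwap h] at hlt hgt ⊢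
    split_ifs <;> omega
  rw [permLen, hset, Finset.card_insert_of_notMem, permLen]
  simp

theorem IsLeftDescent.permLen_adjSwap_mul {w : Equiv.Perm (Fin n)} {i : ℕ}
    (hd : IsLeftDescent w i) : permLen (adjSwap n i * w) + 1 = permLen w := by
  obtain ⟨h, hw⟩ := hd
  have := permLen_adjSwap_mul_of_lt h (w := adjSwap n i * w) (by
    rw [inv_adjSwap_mul_apply, inv_adjSwap_mul_apply, adjSwap_of_lt h, Equiv.swap_apply_left,
      Equiv.swap_apply_right]
    exact hw)
  rwa [adjSwap_mul_adjSwap_mul, eq_comm] at this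

theorem isLeftDescent_or_inv_lt {i : ℕ} (h : i + 1 < n) (w : Equiv.Perm (Fin n)) :
    IsLeftDescent w i ∨ w⁻¹ ⟨i, Nat.lt_of_succ_lt h⟩ < w⁻¹ ⟨i + 1, h⟩ := by
  rcases lt_or_gt_of_ne (w⁻¹.injective.ne (Fin.ne_of_val_ne (by simp) :
      (⟨i, Nat.lt_of_succ_lt h⟩ : Fin n) ≠ ⟨i + 1, h⟩)) with hlt | hgt
  · exact .inr hlt
  · exact .inl ⟨h, hgt⟩

theorem permLen_adjSwap_mul_le (i : ℕ) (w : Equiv.Perm (Fin n)) :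
    permLen (adjSwap n i * w) ≤ permLen w + 1 := by
  by_cases h : i + 1 < n
  · rcases isLeftDescent_or_inv_lt h w with hd | hlt
    · have := hd.permLen_adjSwap_mul; omega
    · exact (permLen_adjSwap_mul_of_lt h hlt).le
  · simp [adjSwap, h]

theorem permLen_prod_le (l : List ℕ) : permLen (l.map (adjSwap n)).prod ≤ l.length := by
  induction l with
  | nil => simp [permLen_one]
  | cons i l ih =>
    simp only [List.map_cons, List.prod_cons, List.length_cons]
    exact (permLen_adjSwap_mul_le i _).trans (by omega)

theorem exists_isLeftDescent {w : Equiv.Perm (Fin n)} (hw : w ≠ 1) : ∃ i, IsLeftDescent w i := by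
  by_contra! hasc
  have hmono : StrictMono ⇑w⁻¹ := by
    cases n with
    | zero => exact fun x => x.elim0
    | succ m =>
      refine Fin.strictMono_iff_lt_succ.2 fun x => ?_
      exact (isLeftDescent_or_inv_lt (by omega) w).resolve_left (hasc x)
  refine hw (inv_eq_one.1 (Equiv.ext fun x => ?_))
  exact congrArg (· x) (Subsingleton.elim (hmono.orderIsoOfSurjective _ w⁻¹.surjective)
    (OrderIso.refl _))

end Length

section ReducedWords

variable {n : ℕ}

theorem IsReducedWord.cons {w : Equiv.Perm (Fin n)} {i : ℕ} {l : List ℕ}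
    (hd : IsLeftDescent w i) (hl : IsReducedWord n (adjSwap n i * w) l) :
    IsReducedWord n w (i :: l) := by
  obtain ⟨hrange, hprod, hlen⟩ := hl
  refine ⟨?_, ?_, ?_⟩
  · simpa [hd.1] using hrange
  · rw [List.map_cons, List.prod_cons, hprod, adjSwap_mul_adjSwap_mul]
  · rw [List.length_cons, hlen, hd.permLen_adjSwap_mul]

theorem IsReducedWord.of_cons {w : Equiv.Perm (Fin n)} {i : ℕ} {l : List ℕ}
    (hl : IsReducedWord n w (i :: l)) :
    IsLeftDescent w i ∧ IsReducedWord n (adjSwap n i * w) l := by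
  obtain ⟨hrange, hprod, hlen⟩ := hl
  rw [List.forall_mem_cons] at hrange
  rw [List.map_cons, List.prod_cons] at hprod
  rw [List.length_cons] at hlen
  have htail : (l.map (adjSwap n)).prod = adjSwap n i * w := by
    rw [← hprod, adjSwap_mul_adjSwap_mul]
  have hle : permLen (adjSwap n i * w) ≤ l.length := htail ▸ permLen_prod_le l
  have hd : IsLeftDescent w i := by
    refine (isLeftDescent_or_inv_lt hrange.1 w).resolve_right fun hlt => ?_
    have := permLen_adjSwap_mul_of_lt hrange.1 hlt
    omega
  have := hd.permLen_adjSwap_mul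
  exact ⟨hd, hrange.2, htail, by omega⟩

theorem exists_isReducedWord (w : Equiv.Perm (Fin n)) : ∃ l, IsReducedWord n w l := by
  induction hk : permLen w generalizing w with
  | zero =>
    have hw : w = 1 := by
      by_contra hw
      obtain ⟨i, hd⟩ := exists_isLeftDescent hw
      have := hd.permLen_adjSwap_mul
      omega
    exact ⟨[], by simp, by simp [hw], by simp [hk]⟩
  | succ k ih =>
    have hw : w ≠ 1 := by
      rintro rfl
      simp [permLen_one] at hk
    obtain ⟨i, hd⟩ := exists_isLeftDescent hw
    obtain ⟨l, hl⟩ := ih (adjSwap n i * w) (by have := hd.permLen_adjSwap_mul; omega)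
    exact ⟨i :: l, hl.cons hd⟩

theorem isLeftDescent_w0 {i : ℕ} (h : i + 1 < n) : IsLeftDescent (w0 n) i :=
  ⟨h, by
    simp only [w0, Equiv.Perm.coe_inv, Fin.revPerm_symm, Fin.revPerm_apply, Fin.lt_def, Fin.val_rev]
    omega⟩

theorem IsLeftDescent.adjSwap_mul_of_far {w : Equiv.Perm (Fin n)} {i j : ℕ}
    (hj : IsLeftDescent w j) (hij : i + 2 ≤ j ∨ j + 2 ≤ i) :
    IsLeftDescent (adjSwap n i * w) j := by
  obtain ⟨h, hw⟩ := hj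
  refine ⟨h, ?_⟩
  rwa [inv_adjSwap_mul_apply, inv_adjSwap_mul_apply, adjSwap_apply_of_ne _ (by omega) (by omega),
    adjSwap_apply_of_ne _ (by omega) (by omega)]

theorem IsLeftDescent.adjSwap_mul_succ {w : Equiv.Perm (Fin n)} {i : ℕ}
    (hi : IsLeftDescent w i) (hi' : IsLeftDescent w (i + 1)) :
    IsLeftDescent (adjSwap n i * w) (i + 1)
      ∧ IsLeftDescent (adjSwap n (i + 1) * (adjSwap n i * w)) i := by
  obtain ⟨h, hw⟩ := hi
  obtain ⟨h', hw'⟩ := hi'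
  refine ⟨⟨h', ?_⟩, ⟨h, ?_⟩⟩ <;>
    simp (disch := omega) only [inv_adjSwap_mul_apply, adjSwap_apply_left, adjSwap_apply_right,
      adjSwap_apply_of_ne]
  · exact hw'.trans hw
  · exact hw'

theorem IsLeftDescent.adjSwap_succ_mul {w : Equiv.Perm (Fin n)} {i : ℕ}
    (hi : IsLeftDescent w i) (hi' : IsLeftDescent w (i + 1)) :
    IsLeftDescent (adjSwap n (i + 1) * w) i
      ∧ IsLeftDescent (adjSwap n i * (adjSwap n (i + 1) * w)) (i + 1) := by
  obtain ⟨h, hw⟩ := hi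
  obtain ⟨h', hw'⟩ := hi'
  refine ⟨⟨h, ?_⟩, ⟨h', ?_⟩⟩ <;>
    simp (disch := omega) only [inv_adjSwap_mul_apply, adjSwap_apply_left, adjSwap_apply_right,
      adjSwap_apply_of_ne]
  · exact hw'.trans hw
  · exact hw

end ReducedWords

section Operators

variable {n : ℕ}

theorem demAt_of_lt {i : ℕ} (h : i + 1 < n) :
    demAt n i = demazure (⟨i, Nat.lt_of_succ_lt h⟩ : Fin n) ⟨i + 1, h⟩ :=
  dif_pos h

theorem demWord_cons (i : ℕ) (l : List ℕ) : demWord n (i :: l) = demAt n i ∘ demWord n l := rfl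

theorem demAt_comm {i j : ℕ} (hi : i + 1 < n) (hj : j + 1 < n) (hij : i + 2 ≤ j ∨ j + 2 ≤ i)
    (f : MvPolynomial (Fin n) ℚ) : demAt n i (demAt n j f) = demAt n j (demAt n i f) := by
  rw [demAt_of_lt hi, demAt_of_lt hj]
  exact demazure_demazure_comm (Fin.ne_of_val_ne (by simp)) (Fin.ne_of_val_ne (by simp))
    (Fin.ne_of_val_ne (by dsimp only; omega)) (Fin.ne_of_val_ne (by dsimp only; omega))
    (Fin.ne_of_val_ne (by dsimp only; omega)) (Fin.ne_of_val_ne (by dsimp only; omega)) f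

theorem demAt_braid {i : ℕ} (h : i + 2 < n) (f : MvPolynomial (Fin n) ℚ) :
    demAt n i (demAt n (i + 1) (demAt n i f)) = demAt n (i + 1) (demAt n i (demAt n (i + 1) f)) := by
  rw [demAt_of_lt (i := i) (by omega), demAt_of_lt (i := i + 1) h]
  exact demazure_braid (Fin.ne_of_val_ne (by simp)) (Fin.ne_of_val_ne (by simp))
    (Fin.ne_of_val_ne (by dsimp only; omega)) f

def DemWordWellDefined (n : ℕ) (w : Equiv.Perm (Fin n)) : Prop :=
  ∀ l m, IsReducedWord n w l → IsReducedWord n w m → demWord n l = demWord n m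

theorem demWord_cons_eq_of_far {w : Equiv.Perm (Fin n)} {i j : ℕ} {l m : List ℕ}
    (hi : IsLeftDescent w i) (hj : IsLeftDescent w j) (hij : i + 2 ≤ j ∨ j + 2 ≤ i)
    (hwi : DemWordWellDefined n (adjSwap n i * w)) (hwj : DemWordWellDefined n (adjSwap n j * w))
    (hl : IsReducedWord n (adjSwap n i * w) l) (hm : IsReducedWord n (adjSwap n j * w) m) :
    demWord n (i :: l) = demWord n (j :: m) := by
  obtain ⟨t, ht⟩ := exists_isReducedWord (adjSwap n j * (adjSwap n i * w))
  have hcomm : adjSwap n i * (adjSwap n j * w) = adjSwap n j * (adjSwap n i * w) := by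
    rw [← mul_assoc, ← mul_assoc, adjSwap_mul_comm hij]
  have hl' : demWord n l = demWord n (j :: t) :=
    hwi l _ hl (.cons (hj.adjSwap_mul_of_far hij) ht)
  have hm' : demWord n m = demWord n (i :: t) :=
    hwj m _ hm (.cons (hi.adjSwap_mul_of_far (i := j) (by omega)) (hcomm ▸ ht))
  funext f
  simp only [demWord_cons, Function.comp_apply, hl', hm']
  exact demAt_comm hi.1 hj.1 hij _

theorem demWord_cons_eq_of_succ {w : Equiv.Perm (Fin n)} {i : ℕ} {l m : List ℕ}
    (hi : IsLeftDescent w i) (hi' : IsLeftDescent w (i + 1))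
    (hwi : DemWordWellDefined n (adjSwap n i * w))
    (hwi' : DemWordWellDefined n (adjSwap n (i + 1) * w))
    (hl : IsReducedWord n (adjSwap n i * w) l) (hm : IsReducedWord n (adjSwap n (i + 1) * w) m) :
    demWord n (i :: l) = demWord n ((i + 1) :: m) := by
  obtain ⟨t, ht⟩ := exists_isReducedWord (adjSwap n i * (adjSwap n (i + 1) * (adjSwap n i * w)))
  have hbraid : adjSwap n (i + 1) * (adjSwap n i * (adjSwap n (i + 1) * w))
      = adjSwap n i * (adjSwap n (i + 1) * (adjSwap n i * w)) := by
    simp only [← mul_assoc, adjSwap_braid hi'.1]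
  obtain ⟨hd₁, hd₂⟩ := hi.adjSwap_mul_succ hi'
  obtain ⟨hd₁', hd₂'⟩ := hi.adjSwap_succ_mul hi'
  have hl' : demWord n l = demWord n ((i + 1) :: i :: t) :=
    hwi l _ hl (.cons hd₁ (.cons hd₂ ht))
  have hm' : demWord n m = demWord n (i :: (i + 1) :: t) :=
    hwi' m _ hm (.cons hd₁' (.cons hd₂' (hbraid ▸ ht)))
  funext f
  simp only [demWord_cons, Function.comp_apply, hl', hm']
  exact demAt_braid hi'.1 _

theorem demWordWellDefined (w : Equiv.Perm (Fin n)) : DemWordWellDefined n w := by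
  induction hk : permLen w using Nat.strong_induction_on generalizing w with
  | _ k ih =>
    have ih' {i : ℕ} (hd : IsLeftDescent w i) : DemWordWellDefined n (adjSwap n i * w) :=
      ih _ (by have := hd.permLen_adjSwap_mul; omega) _ rfl
    rintro (_ | ⟨i, l⟩) (_ | ⟨j, m⟩) hl hm
    · rfl
    · exact absurd (hl.2.2.trans hm.2.2.symm) (by simp)
    · exact absurd (hl.2.2.trans hm.2.2.symm) (by simp)
    obtain ⟨hi, hl⟩ := hl.of_cons
    obtain ⟨hj, hm⟩ := hm.of_cons
    rcases (by omega : i = j ∨ i + 2 ≤ j ∨ j + 2 ≤ i ∨ j = i + 1 ∨ i = j + 1)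
      with rfl | hij | hij | rfl | rfl
    · rw [demWord_cons, demWord_cons, ih' hi l m hl hm]
    · exact demWord_cons_eq_of_far hi hj (.inl hij) (ih' hi) (ih' hj) hl hm
    · exact demWord_cons_eq_of_far hi hj (.inr hij) (ih' hi) (ih' hj) hl hm
    · exact demWord_cons_eq_of_succ hi hj (ih' hi) (ih' hj) hl hm
    · exact (demWord_cons_eq_of_succ hj hi (ih' hj) (ih' hi) hm hl).symm

theorem demazureOf_eq_demWord {w : Equiv.Perm (Fin n)} {l : List ℕ} (hl : IsReducedWord n w l) :
    demazureOf n w = demWord n l := by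
  have hex : ∃ l, IsReducedWord n w l := ⟨l, hl⟩
  rw [demazureOf, dif_pos hex]
  exact demWordWellDefined w _ _ hex.choose_spec hl

end Operators

theorem rename_adjSwap_demazureOf_w0 {n j : ℕ} (hj : j + 1 < n) (F : MvPolynomial (Fin n) ℚ) :
    rename (adjSwap n j) (demazureOf n (w0 n) F) = demazureOf n (w0 n) F := by
  obtain ⟨t, ht⟩ := exists_isReducedWord (adjSwap n j * w0 n)
  rw [demazureOf_eq_demWord (.cons (isLeftDescent_w0 hj) ht), demWord_cons, Function.comp_apply,
    demAt_of_lt hj, adjSwap_of_lt hj]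
  exact rename_swap_demazure (Fin.ne_of_val_ne (by simp)) _

theorem demazure_w0_symmetric_general (n : ℕ) (F : MvPolynomial (Fin n) ℚ) :
    (demazureOf n (w0 n) F).IsSymmetric := by
  intro e
  obtain ⟨l, hrange, hprod, -⟩ := exists_isReducedWord e
  rw [← hprod]
  refine List.prod_induction
    (fun e : Equiv.Perm (Fin n) => rename e (demazureOf n (w0 n) F) = demazureOf n (w0 n) F)
    (fun a b ha hb => ?_) ?_ ?_
  · rw [← rename_perm_rename_perm, hb, ha]
  · rw [Equiv.Perm.coe_one, rename_id, AlgHom.id_apply]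
  · intro x hx
    obtain ⟨j, hj, rfl⟩ := List.mem_map.1 hx
    exact rename_adjSwap_demazureOf_w0 (hrange j hj) F

/-- For the longest element `w₀`, the polynomial `∂_{w₀} F` is symmetric, i.e. invariant
under every permutation of the variables. -/
theorem demazure_w0_symmetric (n : ℕ) (hn : 1 ≤ n) (F : MvPolynomial (Fin n) ℚ) :
    (demazureOf n (w0 n) F).IsSymmetric :=
  demazure_w0_symmetric_general n F
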